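/- Let D_M be a containment digraph and N a maximum antichain of D_M. Then the uncovering number of D_M equals the uncovering number of the induced subdigraph D_M[N ∪ V_N^+], i.e., β(D_M) = β(D_M[N ∪ V_N^+]). -/

import Mathlib

open Classical Finset

/-- The family of support sets of the columns of a binary matrix `M`:
the vertex set of the containment digraph `D_M`. -/
def suppFamily {m n : ℕ} (M : Matrix (Fin m) (Fin n) Bool) :
    Finset (Finset (Fin m)) :=
  Finset.univ.image fun j => Finset.univ.filter fun i => M i j = true

/-- `B` is a branching of the containment digraph on the family `V`:
its arcs are proper inclusions between members of `V` and every vertex is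
the tail of at most one arc. -/
def IsBranching {ρ : Type*} [DecidableEq ρ] (V : Finset (Finset ρ))
    (B : Finset (Finset ρ × Finset ρ)) : Prop :=
  (∀ p ∈ B, p.1 ∈ V ∧ p.2 ∈ V ∧ p.1 ⊂ p.2) ∧
  ∀ p ∈ B, ∀ q ∈ B, p.1 = q.1 → p.2 = q.2

/-- A branching is linear if every vertex is the head of at most one arc. -/
def IsLinear {ρ : Type*} [DecidableEq ρ]
    (B : Finset (Finset ρ × Finset ρ)) : Prop :=
  ∀ p ∈ B, ∀ q ∈ B, p.2 = q.2 → p.1 = q.1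

/-- `nuB B v` = number of rows of `v` uncovered in `v` with respect to `B`,
i.e. `|v \ ⋃_{u ∈ N_B^-(v)} u|`. -/
def nuB {ρ : Type*} [DecidableEq ρ] (B : Finset (Finset ρ × Finset ρ))
    (v : Finset ρ) : ℕ :=
  (v \ (B.filter fun p => p.2 = v).sup fun p => p.1).card

/-- The total number of `B`-uncovered pairs. -/
def uncov {ρ : Type*} [DecidableEq ρ] (V : Finset (Finset ρ))
    (B : Finset (Finset ρ × Finset ρ)) : ℕ :=
  ∑ v ∈ V, nuB B v

/-- The uncovering number: minimum number of uncovered pairs over all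
branchings. -/
noncomputable def beta {ρ : Type*} [DecidableEq ρ]
    (V : Finset (Finset ρ)) : ℕ :=
  sInf {k | ∃ B, IsBranching V B ∧ uncov V B = k}

/-- The linear uncovering number: minimum number of uncovered pairs over all
linear branchings. -/
noncomputable def betaL {ρ : Type*} [DecidableEq ρ]
    (V : Finset (Finset ρ)) : ℕ :=
  sInf {k | ∃ B, IsBranching V B ∧ IsLinear B ∧ uncov V B = k}

/-- A set of members of a family of sets is an antichain if its elements are
pairwise incomparable under inclusion. -/
def IsAntichainFam {ρ : Type*} (X : Finset (Finset ρ)) : Prop :=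
  ∀ u ∈ X, ∀ v ∈ X, u ≠ v → ¬ u ⊆ v ∧ ¬ v ⊆ u

/-- The width of (the containment digraph on) a family of finite sets. -/
noncomputable def widthFam {ρ : Type*} [DecidableEq ρ]
    (V : Finset (Finset ρ)) : ℕ :=
  (V.powerset.filter IsAntichainFam).sup Finset.card

/-- The maximum total cardinality of an antichain. -/
noncomputable def alphaW {ρ : Type*} [DecidableEq ρ]
    (V : Finset (Finset ρ)) : ℕ :=
  (V.powerset.filter IsAntichainFam).sup fun S => ∑ v ∈ S, v.card


/-!
The set `W = N ∪ V_N^+` is closed upwards in `V`, so `V \ W` is closed downwards and its vertices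
can only be covered from inside it. Restricting a branching of `V` to the arcs with tail in `W`
uncovers at most the rows of the tails outside `W`, and these are paid for by the uncovered pairs
of `V \ W`; hence `β(W) ≤ β(V)`.

Conversely, because `N` is a maximum antichain, Hall's theorem yields an injection `f` from
`V \ W` into `(V \ W) ∪ N` with `q ⊂ f q`. The arcs `q → f q` form a linear branching, and their
heads receive no arcs from a branching of `W` (no member of `W` lies strictly below a member of
`N`). Adding them to a branching of `W` keeps the number of uncovered pairs: each `q` contributes
`|q|` uncovered pairs and covers `|q|` rows of `f q`. Hence `β(V) ≤ β(W)`.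
-/

lemma isAntichainFam_of_forall_not_ssubset {ρ : Type*} {X : Finset (Finset ρ)}
    (h : ∀ u ∈ X, ∀ v ∈ X, ¬ u ⊂ v) : IsAntichainFam X := fun u hu v hv huv =>
  ⟨fun huv' => h u hu v hv (huv'.ssubset_of_ne huv),
    fun hvu => h v hv u hu (hvu.ssubset_of_ne huv.symm)⟩

section Uncovering

variable {ρ : Type*} [DecidableEq ρ]

lemma isBranching_empty (V : Finset (Finset ρ)) : IsBranching V ∅ := by
  simp [IsBranching]

lemma injOn_fst_of_isBranching {V : Finset (Finset ρ)} {B : Finset (Finset ρ × Finset ρ)}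
    (hB : IsBranching V B) : Set.InjOn Prod.fst (B : Set (Finset ρ × Finset ρ)) :=
  fun p hp q hq h => Prod.ext h (hB.2 p hp q hq h)

lemma nuB_eq_card {B : Finset (Finset ρ × Finset ρ)} {v : Finset ρ}
    (h : ∀ p ∈ B, p.2 ≠ v) : nuB B v = v.card := by
  rw [nuB, filter_false_of_mem h, sup_empty, bot_eq_empty, sdiff_empty]

lemma nuB_union_of_forall_ne (B₁ : Finset (Finset ρ × Finset ρ))
    {B₂ : Finset (Finset ρ × Finset ρ)} {v : Finset ρ} (h : ∀ p ∈ B₂, p.2 ≠ v) :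
    nuB (B₁ ∪ B₂) v = nuB B₁ v := by
  rw [nuB, nuB, filter_union, filter_false_of_mem h, union_empty]

lemma nuB_union_add_card {B₁ B₂ : Finset (Finset ρ × Finset ρ)}
    (h : ∀ p ∈ B₁, ∀ q ∈ B₂, p.2 ≠ q.2) (v : Finset ρ) :
    nuB (B₁ ∪ B₂) v + v.card = nuB B₁ v + nuB B₂ v := by
  by_cases h₁ : ∃ p ∈ B₁, p.2 = v
  · obtain ⟨p, hp, rfl⟩ := h₁
    rw [nuB_union_of_forall_ne B₁ (fun q hq => (h p hp q hq).symm),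
      nuB_eq_card (fun q hq => (h p hp q hq).symm)]
  · have h₁ : ∀ p ∈ B₁, p.2 ≠ v := fun p hp hpv => h₁ ⟨p, hp, hpv⟩
    rw [union_comm, nuB_union_of_forall_ne B₂ h₁, nuB_eq_card h₁, add_comm]

lemma nuB_le_add_sum_sdiff (B B' : Finset (Finset ρ × Finset ρ)) (v : Finset ρ) :
    nuB B' v ≤ nuB B v + ∑ p ∈ B \ B' with p.2 = v, p.1.card := by
  have hcover : v \ (B'.filter fun p => p.2 = v).sup Prod.fst ⊆
      (v \ (B.filter fun p => p.2 = v).sup Prod.fst) ∪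
        ((B \ B').filter fun p => p.2 = v).sup Prod.fst := by
    intro x hx
    simp only [mem_sdiff, mem_union, mem_sup, mem_filter] at hx ⊢
    by_contra! hcon
    obtain ⟨p, ⟨hpB, hpv⟩, hxp⟩ := hcon.1 hx.1
    exact hx.2 ⟨p, ⟨by_contra fun hpB' => hcon.2 p ⟨⟨hpB, hpB'⟩, hpv⟩ hxp, hpv⟩, hxp⟩
  calc nuB B' v ≤ _ := card_le_card hcover
    _ ≤ nuB B v + (((B \ B').filter fun p => p.2 = v).sup Prod.fst).card := card_union_le _ _
    _ ≤ _ := by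
      rw [sup_eq_biUnion]
      exact Nat.add_le_add_left card_biUnion_le _

lemma nuB_add_sum_card_of_isLinear {B : Finset (Finset ρ × Finset ρ)} (hlin : IsLinear B)
    (hsub : ∀ p ∈ B, p.1 ⊆ p.2) (v : Finset ρ) :
    nuB B v + ∑ p ∈ B with p.2 = v, p.1.card = v.card := by
  rcases (B.filter fun p => p.2 = v).eq_empty_or_nonempty with h | ⟨p, hp⟩
  · rw [nuB, h]
    simp
  · obtain ⟨hpB, rfl⟩ := mem_filter.1 hp
    have hsingle : (B.filter fun q => q.2 = p.2) = {p} := by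
      refine eq_singleton_iff_unique_mem.2 ⟨hp, fun q hq => ?_⟩
      obtain ⟨hqB, hqp⟩ := mem_filter.1 hq
      exact Prod.ext (hlin q hqB p hpB hqp) hqp
    rw [nuB, hsingle, sup_singleton, sum_singleton]
    exact card_sdiff_add_card_eq_card (hsub p hpB)

lemma uncov_eq_add_of_subset {V W : Finset (Finset ρ)} {B : Finset (Finset ρ × Finset ρ)}
    (hWV : W ⊆ V) (hB : ∀ p ∈ B, p.2 ∈ W) :
    uncov V B = uncov W B + ∑ v ∈ V \ W, v.card := by
  rw [uncov, uncov, ← sum_sdiff hWV, add_comm]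
  congr 1
  exact sum_congr rfl fun v hv =>
    nuB_eq_card fun p hp hpv => (mem_sdiff.1 hv).2 (hpv ▸ hB p hp)

lemma uncov_add_sum_card_fst {V : Finset (Finset ρ)} {E : Finset (Finset ρ × Finset ρ)}
    (hE : IsBranching V E) (hlin : IsLinear E) :
    uncov V E + ∑ p ∈ E, p.1.card = ∑ v ∈ V, v.card := by
  rw [uncov, ← sum_fiberwise_of_maps_to (g := Prod.snd) fun p hp => (hE.1 p hp).2.1,
    ← sum_add_distrib]
  exact sum_congr rfl fun v _ =>
    nuB_add_sum_card_of_isLinear hlin (fun p hp => (hE.1 p hp).2.2.subset) v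

lemma sum_card_fst_le {V Q : Finset (Finset ρ)} {B A : Finset (Finset ρ × Finset ρ)}
    (hB : IsBranching V B) (hAB : A ⊆ B) (hAQ : ∀ p ∈ A, p.1 ∈ Q) :
    ∑ p ∈ A, p.1.card ≤ ∑ q ∈ Q, q.card := by
  rw [← sum_image ((injOn_fst_of_isBranching hB).mono (coe_subset.2 hAB))]
  exact sum_le_sum_of_subset fun q hq => by
    obtain ⟨p, hp, rfl⟩ := mem_image.1 hq
    exact hAQ p hp

section UpperSet

variable {V W : Finset (Finset ρ)} {B : Finset (Finset ρ × Finset ρ)}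

lemma isBranching_filter_fst (hB : IsBranching V B)
    (hup : ∀ u ∈ W, ∀ v ∈ V, u ⊂ v → v ∈ W) :
    IsBranching W (B.filter fun p => p.1 ∈ W) := by
  refine ⟨fun p hp => ?_, fun p hp q hq => hB.2 p (mem_filter.1 hp).1 q (mem_filter.1 hq).1⟩
  obtain ⟨hpB, hpW⟩ := mem_filter.1 hp
  obtain ⟨-, hp₂, hssub⟩ := hB.1 p hpB
  exact ⟨hpW, hup _ hpW _ hp₂ hssub, hssub⟩

lemma uncov_filter_fst_le (hB : IsBranching V B) (hWV : W ⊆ V)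
    (hup : ∀ u ∈ W, ∀ v ∈ V, u ⊂ v → v ∈ W) :
    uncov W (B.filter fun p => p.1 ∈ W) ≤ uncov V B := by
  set B' := B.filter fun p => p.1 ∈ W
  have hsplit : uncov V B' = uncov W B' + ∑ v ∈ V \ W, v.card :=
    uncov_eq_add_of_subset hWV fun p hp => ((isBranching_filter_fst hB hup).1 p hp).2.1
  have hlose : uncov V B' ≤ uncov V B + ∑ p ∈ B \ B', p.1.card := by
    rw [uncov, uncov, ← sum_fiberwise_of_maps_to (g := Prod.snd)
      fun p hp => (hB.1 p (mem_sdiff.1 hp).1).2.1, ← sum_add_distrib]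
    exact sum_le_sum fun v _ => nuB_le_add_sum_sdiff B B' v
  have hpay : ∑ p ∈ B \ B', p.1.card ≤ ∑ v ∈ V \ W, v.card := by
    refine sum_card_fst_le hB sdiff_subset fun p hp => ?_
    obtain ⟨hpB, hpB'⟩ := mem_sdiff.1 hp
    exact mem_sdiff.2 ⟨(hB.1 p hpB).1, fun hpW => hpB' (mem_filter.2 ⟨hpB, hpW⟩)⟩
  omega

end UpperSet

section Extension

variable {V W : Finset (Finset ρ)} {B E : Finset (Finset ρ × Finset ρ)}

lemma isBranching_union (hB : IsBranching W B) (hE : IsBranching V E) (hWV : W ⊆ V)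
    (hE₁ : ∀ p ∈ E, p.1 ∉ W) : IsBranching V (B ∪ E) := by
  refine ⟨fun p hp => ?_, fun p hp q hq hpq => ?_⟩
  · rcases mem_union.1 hp with hp | hp
    · obtain ⟨h₁, h₂, h⟩ := hB.1 p hp
      exact ⟨hWV h₁, hWV h₂, h⟩
    · exact hE.1 p hp
  · rcases mem_union.1 hp with hp | hp <;> rcases mem_union.1 hq with hq | hq
    · exact hB.2 p hp q hq hpq
    · exact absurd (hpq ▸ (hB.1 p hp).1) (hE₁ q hq)
    · exact absurd (hpq ▸ (hB.1 q hq).1) (hE₁ p hp)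
    · exact hE.2 p hp q hq hpq

lemma uncov_union_eq (hB : IsBranching W B) (hE : IsBranching V E) (hlin : IsLinear E)
    (hWV : W ⊆ V) (hE₁ : E.image Prod.fst = V \ W) (hheads : ∀ p ∈ B, ∀ q ∈ E, p.2 ≠ q.2) :
    uncov V (B ∪ E) = uncov W B := by
  have hdisj : uncov V (B ∪ E) + ∑ v ∈ V, v.card = uncov V B + uncov V E := by
    simp only [uncov, ← sum_add_distrib]
    exact sum_congr rfl fun v _ => nuB_union_add_card hheads v
  have hB_split : uncov V B = uncov W B + ∑ v ∈ V \ W, v.card :=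
    uncov_eq_add_of_subset hWV fun p hp => (hB.1 p hp).2.1
  have hE_count : uncov V E + ∑ p ∈ E, p.1.card = ∑ v ∈ V, v.card :=
    uncov_add_sum_card_fst hE hlin
  have htails : ∑ p ∈ E, p.1.card = ∑ v ∈ V \ W, v.card := by
    rw [← hE₁, sum_image (injOn_fst_of_isBranching hE)]
  omega

end Extension

section MaxAntichain

variable {V N Q : Finset (Finset ρ)}

/-- Hall's condition: the members of `S ∪ N` lying strictly above no member of `S` form an
antichain, so by maximality of `N` there are at most `|N|` of them. -/
lemma card_le_card_filter_ssubset (hN : N ⊆ V) (hanti : IsAntichainFam N)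
    (hmax : ∀ S ⊆ V, IsAntichainFam S → S.card ≤ N.card) (hQV : Q ⊆ V)
    (hQ : ∀ q ∈ Q, ∀ u ∈ N, ¬ u ⊆ q)
    {S : Finset (Finset ρ)} (hSQ : S ⊆ Q) :
    S.card ≤ ((Q ∪ N).filter fun x => ∃ q ∈ S, q ⊂ x).card := by
  set T := (Q ∪ N).filter fun x => ∃ q ∈ S, q ⊂ x
  have hST : IsAntichainFam ((S \ T) ∪ (N \ T)) := by
    refine isAntichainFam_of_forall_not_ssubset fun a ha b hb hab => ?_
    have hbQN : b ∈ Q ∪ N := by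
      rcases mem_union.1 hb with hb | hb
      · exact mem_union_left _ (hSQ (mem_sdiff.1 hb).1)
      · exact mem_union_right _ (mem_sdiff.1 hb).1
    rcases mem_union.1 ha with ha | ha
    · have hbT : b ∉ T := by rcases mem_union.1 hb with hb | hb <;> exact (mem_sdiff.1 hb).2
      exact hbT (mem_filter.2 ⟨hbQN, a, (mem_sdiff.1 ha).1, hab⟩)
    · rcases mem_union.1 hb with hb | hb
      · exact hQ b (hSQ (mem_sdiff.1 hb).1) a (mem_sdiff.1 ha).1 hab.subset
      · exact (hanti a (mem_sdiff.1 ha).1 b (mem_sdiff.1 hb).1 hab.ne).1 hab.subset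
  have hbound := hmax _
    (union_subset (sdiff_subset.trans (hSQ.trans hQV)) (sdiff_subset.trans hN)) hST
  have hSN : Disjoint S N := disjoint_left.2 fun x hxS hxN => hQ x (hSQ hxS) x hxN subset_rfl
  have h₁ := card_sdiff_add_card_inter S T
  have h₂ := card_sdiff_add_card_inter N T
  have h₃ : #((S \ T) ∪ (N \ T)) = #(S \ T) + #(N \ T) :=
    card_union_of_disjoint (hSN.mono sdiff_subset sdiff_subset)
  have h₄ : #((S ∩ T) ∪ (N ∩ T)) = #(S ∩ T) + #(N ∩ T) :=
    card_union_of_disjoint (hSN.mono inter_subset_left inter_subset_left)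
  have h₅ : #((S ∩ T) ∪ (N ∩ T)) ≤ #T :=
    card_le_card (union_subset inter_subset_right inter_subset_right)
  omega

lemma exists_linear_branching_of_maxAntichain (hN : N ⊆ V) (hanti : IsAntichainFam N)
    (hmax : ∀ S ⊆ V, IsAntichainFam S → S.card ≤ N.card) (hQV : Q ⊆ V)
    (hQ : ∀ q ∈ Q, ∀ u ∈ N, ¬ u ⊆ q) :
    ∃ E, IsBranching V E ∧ IsLinear E ∧ E.image Prod.fst = Q ∧ ∀ p ∈ E, p.2 ∈ Q ∪ N := by
  let t : Q → Finset (Finset ρ) := fun q => (Q ∪ N).filter fun x => q.1 ⊂ x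
  have hall : ∀ A : Finset Q, A.card ≤ (A.biUnion t).card := fun A =>
    calc A.card = (A.map (Function.Embedding.subtype _)).card := (card_map _).symm
      _ ≤ _ := card_le_card_filter_ssubset hN hanti hmax hQV hQ fun x hx => by
          obtain ⟨q, -, rfl⟩ := mem_map.1 hx
          exact q.2
      _ ≤ _ := card_le_card fun x hx => by
          obtain ⟨hx, q, hq, hqx⟩ := mem_filter.1 hx
          obtain ⟨q, hqA, rfl⟩ := mem_map.1 hq
          exact mem_biUnion.2 ⟨q, hqA, mem_filter.2 ⟨hx, hqx⟩⟩
  obtain ⟨f, hf, hft⟩ := (all_card_le_biUnion_card_iff_exists_injective t).1 hall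
  have hfQN : ∀ q, f q ∈ Q ∪ N ∧ q.1 ⊂ f q := fun q => mem_filter.1 (hft q)
  refine ⟨Q.attach.image fun q => (q.1, f q), ⟨?_, ?_⟩, ?_, ?_, ?_⟩
  · simp only [mem_image, mem_attach, true_and]
    rintro _ ⟨q, rfl⟩
    exact ⟨hQV q.2, (union_subset hQV hN) (hfQN q).1, (hfQN q).2⟩
  · simp only [mem_image, mem_attach, true_and]
    rintro _ ⟨q, rfl⟩ _ ⟨q', rfl⟩ hqq'
    rw [Subtype.ext hqq']
  · simp only [IsLinear, mem_image, mem_attach, true_and]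
    rintro _ ⟨q, rfl⟩ _ ⟨q', rfl⟩ hqq'
    rw [hf hqq']
  · rw [image_image]
    exact attach_image_val
  · simp only [mem_image, mem_attach, true_and]
    rintro _ ⟨q, rfl⟩
    exact (hfQN q).1

end MaxAntichain

section Beta

variable {V W : Finset (Finset ρ)}

lemma beta_le_of_forall_exists
    (h : ∀ B', IsBranching W B' → ∃ B, IsBranching V B ∧ uncov V B ≤ uncov W B') :
    beta V ≤ beta W := by
  obtain ⟨B', hB', hB'opt⟩ : ∃ B', IsBranching W B' ∧ uncov W B' = beta W :=
    Nat.sInf_mem (s := {k | ∃ B, IsBranching W B ∧ uncov W B = k})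
      ⟨_, ∅, isBranching_empty W, rfl⟩
  obtain ⟨B, hB, hle⟩ := h B' hB'
  calc beta V ≤ uncov V B := Nat.sInf_le ⟨B, hB, rfl⟩
    _ ≤ uncov W B' := hle
    _ = beta W := hB'opt

lemma beta_le_beta_of_upward_closed (hWV : W ⊆ V) (hup : ∀ u ∈ W, ∀ v ∈ V, u ⊂ v → v ∈ W) :
    beta W ≤ beta V :=
  beta_le_of_forall_exists fun _ hB =>
    ⟨_, isBranching_filter_fst hB hup, uncov_filter_fst_le hB hWV hup⟩

lemma beta_le_beta_of_maxAntichain {N : Finset (Finset ρ)} (hN : N ⊆ V) (hanti : IsAntichainFam N)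
    (hmax : ∀ S ⊆ V, IsAntichainFam S → S.card ≤ N.card) (hWV : W ⊆ V)
    (hmin : ∀ w ∈ W, ∀ u ∈ N, ¬ w ⊂ u) (hQ : ∀ q ∈ V \ W, ∀ u ∈ N, ¬ u ⊆ q) :
    beta V ≤ beta W := by
  obtain ⟨E, hE, hlin, hE₁, hE₂⟩ :=
    exists_linear_branching_of_maxAntichain hN hanti hmax sdiff_subset hQ
  have hE₁' : ∀ p ∈ E, p.1 ∉ W := fun p hp =>
    (mem_sdiff.1 (hE₁ ▸ mem_image_of_mem Prod.fst hp)).2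
  refine beta_le_of_forall_exists fun B hB =>
    ⟨B ∪ E, isBranching_union hB hE hWV hE₁', (uncov_union_eq hB hE hlin hWV hE₁ ?_).le⟩
  intro p hp q hq hpq
  obtain ⟨hp₁, hp₂, hpp⟩ := hB.1 p hp
  rcases mem_union.1 (hE₂ q hq) with hq | hq
  · exact (mem_sdiff.1 hq).2 (hpq ▸ hp₂)
  · exact hmin p.1 hp₁ q.2 hq (hpq ▸ hpp)

end Beta

end Uncovering

section UpClosure

variable {ρ : Type*} [DecidableEq ρ] {V N : Finset (Finset ρ)} {u v : Finset ρ}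

/-- `N ∪ V_N^+`, the members of `V` lying above some member of `N`, when `N ⊆ V`. -/
def upClosure (V N : Finset (Finset ρ)) : Finset (Finset ρ) :=
  N ∪ V.filter fun v => v ∉ N ∧ ∃ u ∈ N, u ⊂ v

lemma upClosure_subset (hN : N ⊆ V) : upClosure V N ⊆ V :=
  union_subset hN (filter_subset _ _)

lemma exists_subset_of_mem_upClosure (hv : v ∈ upClosure V N) : ∃ u ∈ N, u ⊆ v := by
  rcases mem_union.1 hv with hv | hv
  · exact ⟨v, hv, subset_rfl⟩
  · obtain ⟨-, -, u, hu, huv⟩ := mem_filter.1 hv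
    exact ⟨u, hu, huv.subset⟩

lemma mem_upClosure_of_ssubset (hu : u ∈ upClosure V N) (hv : v ∈ V) (huv : u ⊂ v) :
    v ∈ upClosure V N := by
  obtain ⟨n, hn, hnu⟩ := exists_subset_of_mem_upClosure hu
  by_cases hvN : v ∈ N
  · exact mem_union_left _ hvN
  · exact mem_union_right _ (mem_filter.2 ⟨hv, hvN, n, hn, hnu.trans_ssubset huv⟩)

lemma not_ssubset_of_mem_upClosure (hanti : IsAntichainFam N) (hv : v ∈ upClosure V N)
    (hu : u ∈ N) : ¬ v ⊂ u := fun hvu => by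
  obtain ⟨n, hn, hnv⟩ := exists_subset_of_mem_upClosure hv
  have hnu := hnv.trans_ssubset hvu
  exact (hanti n hn u hu hnu.ne).1 hnu.subset

lemma not_subset_of_not_mem_upClosure (hv : v ∈ V) (hvN : v ∉ upClosure V N) (hu : u ∈ N) :
    ¬ u ⊆ v := fun huv => by
  rcases huv.eq_or_ssubset with rfl | huv
  · exact hvN (mem_union_left _ hu)
  · exact hvN (mem_upClosure_of_ssubset (mem_union_left _ hu) hv huv)

end UpClosure

/-- For a maximum antichain `N` of a containment digraph `D_M`,
`β(D_M) = β(D_M[N ∪ V_N^+])`. -/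
theorem stmt11 {m n : ℕ} (M : Matrix (Fin m) (Fin n) Bool)
    (N : Finset (Finset (Fin m))) (hN : N ⊆ suppFamily M)
    (hanti : IsAntichainFam N)
    (hmax : ∀ S ⊆ suppFamily M, IsAntichainFam S → S.card ≤ N.card) :
    beta (suppFamily M) =
      beta (N ∪ (suppFamily M).filter fun v => v ∉ N ∧ ∃ u ∈ N, u ⊂ v) := by
  change beta _ = beta (upClosure (suppFamily M) N)
  have hWV := upClosure_subset hN
  refine le_antisymm ?_ (beta_le_beta_of_upward_closed hWV fun _ hu _ hv huv =>
    mem_upClosure_of_ssubset hu hv huv)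
  refine beta_le_beta_of_maxAntichain hN hanti hmax hWV
    (fun _ hw _ hu => not_ssubset_of_mem_upClosure hanti hw hu) fun q hq _ hu => ?_
  obtain ⟨hqV, hqW⟩ := mem_sdiff.1 hq
  exact not_subset_of_not_mem_upClosure hqV hqW hu
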